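/- arXiv:2301.12601 — 9 statements merged into one kernel-verified Lean document; each statement's English description precedes it below -/
import Mathlib

section
/- (Concavity of OCE; Lemma A.1(d)) Let u be a utility function, P a probability mass function on a finite nonempty set S, g₁, g₂ : S → ℝ, and μ ∈ (0,1). Then OCE^u_P(μ·g₁ + (1−μ)·g₂) ≥ μ·OCE^u_P(g₁) + (1−μ)·OCE^u_P(g₂), where μ·g₁ + (1−μ)·g₂ denotes the pointwise convex combination. -/
/-- A utility function: nondecreasing, concave, `u 0 = 0`, and `u t ≤ t`. -/
def IsUtility (u : ℝ → ℝ) : Prop :=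
  Monotone u ∧ ConcaveOn ℝ Set.univ u ∧ u 0 = 0 ∧ ∀ t : ℝ, u t ≤ t

/-- A probability mass function on a finite type. -/
def IsPMF {S : Type*} [Fintype S] (P : S → ℝ) : Prop :=
  (∀ s, 0 ≤ P s) ∧ ∑ s, P s = 1

/-- The optimized certainty equivalent of `g : S → ℝ` under the pmf `P`. -/
noncomputable def OCE {S : Type*} [Fintype S] (u : ℝ → ℝ) (P : S → ℝ) (g : S → ℝ) : ℝ :=
  ⨆ lam : ℝ, (lam + ∑ s, P s * u (g s - lam))

lemma oce_bdd {S : Type*} [Fintype S] (u : ℝ → ℝ) (hu : IsUtility u)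
    (P : S → ℝ) (hP : IsPMF P) (g : S → ℝ) :
    BddAbove (Set.range fun lam : ℝ => lam + ∑ s, P s * u (g s - lam)) := by
  refine ⟨∑ s, P s * g s, ?_⟩
  rintro x ⟨lam, rfl⟩
  show lam + ∑ s, P s * u (g s - lam) ≤ ∑ s, P s * g s
  have h1 : ∑ s, P s * u (g s - lam) ≤ ∑ s, P s * (g s - lam) :=
    Finset.sum_le_sum fun s _ => mul_le_mul_of_nonneg_left (hu.2.2.2 _) (hP.1 s)
  have h2 : ∑ s, P s * (g s - lam) = (∑ s, P s * g s) - lam := by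
    simp [mul_sub, Finset.sum_sub_distrib, ← Finset.sum_mul, hP.2]
  linarith

/-- Concavity of the OCE. -/
theorem oce_concave {S : Type*} [Fintype S] [Nonempty S]
    (u : ℝ → ℝ) (hu : IsUtility u) (P : S → ℝ) (hP : IsPMF P)
    (g₁ g₂ : S → ℝ) (μ : ℝ) (hμ : μ ∈ Set.Ioo (0:ℝ) 1) :
    μ * OCE u P g₁ + (1 - μ) * OCE u P g₂ ≤
      OCE u P (fun s => μ * g₁ s + (1 - μ) * g₂ s) := by
  obtain ⟨hμ0, hμ1⟩ := hμ
  have hμ1' : (0:ℝ) < 1 - μ := by linarith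
  set C := OCE u P (fun s => μ * g₁ s + (1 - μ) * g₂ s) with hC
  -- pointwise key inequality
  have key : ∀ lam₁ lam₂ : ℝ,
      μ * (lam₁ + ∑ s, P s * u (g₁ s - lam₁)) +
        (1 - μ) * (lam₂ + ∑ s, P s * u (g₂ s - lam₂)) ≤ C := by
    intro lam₁ lam₂
    have hconc : ∀ s : S,
        μ * u (g₁ s - lam₁) + (1 - μ) * u (g₂ s - lam₂) ≤
          u (μ * g₁ s + (1 - μ) * g₂ s - (μ * lam₁ + (1 - μ) * lam₂)) := by
      intro s
      have := hu.2.1.2 (Set.mem_univ (g₁ s - lam₁)) (Set.mem_univ (g₂ s - lam₂))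
        (le_of_lt hμ0) (le_of_lt hμ1') (by ring)
      simpa [smul_eq_mul, show μ * (g₁ s - lam₁) + (1 - μ) * (g₂ s - lam₂) =
        μ * g₁ s + (1 - μ) * g₂ s - (μ * lam₁ + (1 - μ) * lam₂) by ring] using this
    have h1 : μ * (lam₁ + ∑ s, P s * u (g₁ s - lam₁)) +
        (1 - μ) * (lam₂ + ∑ s, P s * u (g₂ s - lam₂)) ≤
        (μ * lam₁ + (1 - μ) * lam₂) +
          ∑ s, P s * u (μ * g₁ s + (1 - μ) * g₂ s - (μ * lam₁ + (1 - μ) * lam₂)) := by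
      have hsum : ∑ s, P s * (μ * u (g₁ s - lam₁) + (1 - μ) * u (g₂ s - lam₂)) ≤
          ∑ s, P s * u (μ * g₁ s + (1 - μ) * g₂ s - (μ * lam₁ + (1 - μ) * lam₂)) :=
        Finset.sum_le_sum fun s _ => mul_le_mul_of_nonneg_left (hconc s) (hP.1 s)
      have hexp : ∑ s, P s * (μ * u (g₁ s - lam₁) + (1 - μ) * u (g₂ s - lam₂)) =
          μ * ∑ s, P s * u (g₁ s - lam₁) + (1 - μ) * ∑ s, P s * u (g₂ s - lam₂) := by
        simp_rw [mul_add]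
        rw [Finset.sum_add_distrib, Finset.mul_sum, Finset.mul_sum]
        congr 1 <;> exact Finset.sum_congr rfl fun s _ => by ring
      nlinarith [hsum, hexp]
    refine h1.trans ?_
    exact le_ciSup (oce_bdd u hu P hP _) (μ * lam₁ + (1 - μ) * lam₂)
  -- now pass to suprema
  have h2 : OCE u P g₂ ≤ (C - μ * OCE u P g₁) / (1 - μ) := by
    rw [OCE]
    refine ciSup_le fun lam₂ => ?_
    rw [le_div_iff₀ hμ1']
    have h1 : OCE u P g₁ ≤ (C - (1 - μ) * (lam₂ + ∑ s, P s * u (g₂ s - lam₂))) / μ := by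
      rw [OCE]
      refine ciSup_le fun lam₁ => ?_
      rw [le_div_iff₀ hμ0]
      nlinarith [key lam₁ lam₂]
    have := (le_div_iff₀ hμ0).mp h1
    nlinarith
  have := (le_div_iff₀ hμ1').mp h2
  nlinarith
end

section
/- (Lemma 2: attainment of the OCE supremum on the range of the random variable) Let u be a utility function, P a probability mass function on a finite nonempty set S, M ≥ 0, and g : S → ℝ with 0 ≤ g(s) ≤ M for all s ∈ S. Then the supremum defining OCE^u_P(g) over λ ∈ ℝ equals the supremum over λ ∈ [0, M], and it is attained: there exists λ* ∈ [0, M] such that OCE^u_P(g) = λ* + Σ_{s∈S} P(s)·u(g(s) − λ*). -/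
/-- Equal-length increments of a concave function are larger further to the left. -/
lemma concave_step (u : ℝ → ℝ) (hu : ConcaveOn ℝ Set.univ u) {a b h : ℝ}
    (hab : a ≤ b) (hh : 0 ≤ h) : u (b + h) - u b ≤ u (a + h) - u a := by
  rcases eq_or_lt_of_le (show a ≤ b + h by linarith) with heq | hlt
  · have hh0 : h = 0 := by linarith
    have hab' : a = b := by linarith
    subst hh0; subst hab'; simp
  · set θ : ℝ := h / (b + h - a) with hθ
    have hd : (0:ℝ) < b + h - a := by linarith
    have hθ0 : 0 ≤ θ := div_nonneg hh hd.le
    have hθ1 : θ ≤ 1 := by rw [hθ, div_le_one hd]; linarith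
    have hmul : θ * (b + h - a) = h := div_mul_cancel₀ h hd.ne'
    have e1 : θ * (b + h) + (1 - θ) * a = a + h := by linear_combination hmul
    have e2 : (1 - θ) * (b + h) + θ * a = b := by linear_combination -hmul
    have h1 := hu.2 (Set.mem_univ (b + h)) (Set.mem_univ a) hθ0 (by linarith)
      (by ring : θ + (1 - θ) = 1)
    have h2 := hu.2 (Set.mem_univ (b + h)) (Set.mem_univ a) (by linarith) hθ0
      (by ring : (1 - θ) + θ = 1)
    simp only [smul_eq_mul] at h1 h2
    rw [e1] at h1
    rw [e2] at h2
    linarith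

/-- Attainment of the OCE supremum on the range `[0, M]` of the random variable. -/
theorem oce_sup_attained {S : Type*} [Fintype S] [Nonempty S]
    (u : ℝ → ℝ) (hu : IsUtility u) (P : S → ℝ) (hP : IsPMF P)
    (M : ℝ) (hM : 0 ≤ M) (g : S → ℝ) (hg : ∀ s, g s ∈ Set.Icc (0:ℝ) M) :
    OCE u P g =
      sSup ((fun lam => lam + ∑ s, P s * u (g s - lam)) '' Set.Icc (0:ℝ) M) ∧
    ∃ lam ∈ Set.Icc (0:ℝ) M, OCE u P g = lam + ∑ s, P s * u (g s - lam) := by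
  obtain ⟨humono, huconc, hu0, hule⟩ := hu
  obtain ⟨hP0, hP1⟩ := hP
  set f : ℝ → ℝ := fun lam => lam + ∑ s, P s * u (g s - lam) with hf
  -- continuity
  have hucont : Continuous u :=
    continuousOn_univ.mp (huconc.continuousOn isOpen_univ)
  have hfcont : Continuous f := by
    apply continuous_id.add
    apply continuous_finset_sum
    intro s _
    exact continuous_const.mul (hucont.comp (continuous_const.sub continuous_id))
  -- attain max on [0, M]
  obtain ⟨lam0, hlam0, hmax⟩ := isCompact_Icc.exists_isMaxOn
    (Set.nonempty_Icc.mpr hM) hfcont.continuousOn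
  have hmax' : ∀ x ∈ Set.Icc (0:ℝ) M, f x ≤ f lam0 := fun x hx => hmax hx
  -- global bound
  have hbound : ∀ lam : ℝ, f lam ≤ f lam0 := by
    intro lam
    rcases le_or_gt lam 0 with h0 | h0
    · -- f lam ≤ f 0
      have hle : f lam ≤ f 0 := by
        have hsum : ∀ s, P s * u (g s - lam) ≤ P s * (u (g s) - lam) := by
          intro s
          apply mul_le_mul_of_nonneg_left _ (hP0 s)
          have := concave_step u huconc (a := 0) (b := g s) (h := -lam)
            (hg s).1 (by linarith)
          have h2 : u (-lam) ≤ -lam := hule _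
          rw [hu0] at this
          have e : g s + -lam = g s - lam := by ring
          rw [e, zero_add] at this
          linarith
        have : ∑ s, P s * u (g s - lam) ≤ ∑ s, P s * (u (g s) - lam) :=
          Finset.sum_le_sum (fun s _ => hsum s)
        have e : ∑ s, P s * (u (g s) - lam)
            = (∑ s, P s * u (g s)) - lam * ∑ s, P s := by
          rw [Finset.mul_sum]; rw [← Finset.sum_sub_distrib]
          congr 1; ext s; ring
        simp only [hf]
        rw [e, hP1] at this
        simpa using by linarith
      exact hle.trans (hmax' 0 ⟨le_refl 0, hM⟩)
    · rcases le_or_gt lam M with h1 | h1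
      · exact hmax' lam ⟨h0.le, h1⟩
      · -- f lam ≤ f M
        have hle : f lam ≤ f M := by
          have hsum : ∀ s, P s * u (g s - lam) ≤ P s * (u (g s - M) + (M - lam)) := by
            intro s
            apply mul_le_mul_of_nonneg_left _ (hP0 s)
            have := concave_step u huconc (a := g s - lam) (b := M - lam)
              (h := lam - M) (by linarith [(hg s).2]) (by linarith)
            have e1 : M - lam + (lam - M) = 0 := by ring
            have e2 : g s - lam + (lam - M) = g s - M := by ring
            rw [e1, e2, hu0] at this
            have h2 : u (M - lam) ≤ M - lam := hule _
            linarith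
          have : ∑ s, P s * u (g s - lam) ≤ ∑ s, P s * (u (g s - M) + (M - lam)) :=
            Finset.sum_le_sum (fun s _ => hsum s)
          have e : ∑ s, P s * (u (g s - M) + (M - lam))
              = (∑ s, P s * u (g s - M)) + (M - lam) * ∑ s, P s := by
            rw [Finset.mul_sum]; rw [← Finset.sum_add_distrib]
            congr 1; ext s; ring
          simp only [hf]
          rw [e, hP1] at this
          linarith
        exact hle.trans (hmax' M ⟨hM, le_refl M⟩)
  have hbdd : BddAbove (Set.range f) := ⟨f lam0, by rintro _ ⟨x, rfl⟩; exact hbound x⟩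
  have hoce : OCE u P g = f lam0 := by
    apply le_antisymm
    · exact ciSup_le hbound
    · exact le_ciSup hbdd lam0
  constructor
  · rw [hoce]
    symm
    apply IsGreatest.csSup_eq
    constructor
    · exact ⟨lam0, hlam0, rfl⟩
    · rintro y ⟨x, hx, rfl⟩
      exact hmax' x hx
  · exact ⟨lam0, hlam0, hoce⟩
end

section
/- (Total-variation Lipschitz bound for OCE, deterministic core of Lemma B.6) Let u be a utility function, let P and Q be probability mass functions on a finite nonempty set S, let M ≥ 0, and let f : S → ℝ with 0 ≤ f(s) ≤ M for all s ∈ S. Then |OCE^u_P(f) − OCE^u_Q(f)| ≤ (Σ_{s∈S} |P(s) − Q(s)|) · (−u(−M)). -/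
/-- On the nonpositive half-line, increments of a utility function dominate length. -/
lemma util_key1 {u : ℝ → ℝ} (hu : IsUtility u) {a b : ℝ} (hab : a ≤ b) (hb : b ≤ 0) :
    b - a ≤ u b - u a := by
  obtain ⟨hmono, hconc, hu0, hle⟩ := hu
  rcases eq_or_lt_of_le hab with rfl | hab'
  · simp
  have ha : a < 0 := lt_of_lt_of_le hab' hb
  set t : ℝ := b / a with ht
  have ht0 : 0 ≤ t := by rw [div_nonneg_iff]; exact Or.inr ⟨hb, ha.le⟩
  have ht1 : t ≤ 1 := by
    rw [div_le_one_iff]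
    exact Or.inr (Or.inr ⟨ha, hab⟩)
  have hta : t * a = b := div_mul_cancel₀ b (ne_of_lt ha)
  have hcc := hconc.2 (Set.mem_univ a) (Set.mem_univ (0:ℝ)) ht0
    (by linarith : (0:ℝ) ≤ 1 - t) (by ring)
  simp only [smul_eq_mul, mul_zero, add_zero, hu0, hta] at hcc
  have h2 : (1 - t) * u a ≤ (1 - t) * a :=
    mul_le_mul_of_nonneg_left (hle a) (by linarith)
  nlinarith [hcc, h2]

/-- On the nonnegative half-line, increments of a utility function are at most length. -/
lemma util_key2 {u : ℝ → ℝ} (hu : IsUtility u) {a b : ℝ} (ha : 0 ≤ a) (hab : a ≤ b) :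
    u b - u a ≤ b - a := by
  obtain ⟨hmono, hconc, hu0, hle⟩ := hu
  rcases eq_or_lt_of_le (ha.trans hab) with hb | hb
  · have ha0 : a = 0 := le_antisymm (hab.trans hb.symm.le) ha
    simp [ha0, ← hb]
  set t : ℝ := a / b with ht
  have ht0 : 0 ≤ t := div_nonneg ha hb.le
  have ht1 : t ≤ 1 := div_le_one_of_le₀ hab hb.le
  have htb : t * b = a := div_mul_cancel₀ a (ne_of_gt hb)
  have hcc := hconc.2 (Set.mem_univ b) (Set.mem_univ (0:ℝ)) ht0
    (by linarith : (0:ℝ) ≤ 1 - t) (by ring)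
  simp only [smul_eq_mul, mul_zero, add_zero, hu0, htb] at hcc
  have h2 : (1 - t) * u b ≤ (1 - t) * b :=
    mul_le_mul_of_nonneg_left (hle b) (by linarith)
  nlinarith [hcc, h2]

/-- Total-variation Lipschitz bound for the OCE. -/
theorem oce_tv_lipschitz {S : Type*} [Fintype S] [Nonempty S]
    (u : ℝ → ℝ) (hu : IsUtility u) (P Q : S → ℝ) (hP : IsPMF P) (hQ : IsPMF Q)
    (M : ℝ) (hM : 0 ≤ M) (f : S → ℝ) (hf : ∀ s, f s ∈ Set.Icc (0:ℝ) M) :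
    |OCE u P f - OCE u Q f| ≤ (∑ s, |P s - Q s|) * (-u (-M)) := by
  obtain ⟨hmono, hconc, hu0, hle⟩ := id hu
  set D : ℝ := (∑ s, |P s - Q s|) * (-u (-M)) with hD
  have huM : M ≤ -u (-M) := by have := hle (-M); linarith
  set φ : (S → ℝ) → ℝ → ℝ := fun p lam => lam + ∑ s, p s * u (f s - lam) with hφ
  -- shift the objective from lam to c given a pointwise bound
  have hshift : ∀ (p : S → ℝ), IsPMF p → ∀ lam c : ℝ,
      (∀ s, u (f s - lam) ≤ u (f s - c) + (c - lam)) → φ p lam ≤ φ p c := by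
    intro p hp lam c hkey
    have hsum : ∑ s, p s * u (f s - lam) ≤
        ∑ s, (p s * u (f s - c) + p s * (c - lam)) := by
      apply Finset.sum_le_sum
      intro s _
      have := mul_le_mul_of_nonneg_left (hkey s) (hp.1 s)
      rw [mul_add] at this
      exact this
    have hconst : ∑ s, p s * (c - lam) = c - lam := by
      rw [← Finset.sum_mul, hp.2, one_mul]
    rw [Finset.sum_add_distrib, hconst] at hsum
    simp only [hφ]
    linarith
  -- clamping the maximizer to [0, M]
  have hclamp : ∀ (p : S → ℝ), IsPMF p → ∀ lam : ℝ,
      φ p lam ≤ φ p (max 0 (min lam M)) := by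
    intro p hp lam
    rcases lt_or_ge lam 0 with h0 | h0
    · have hc : max 0 (min lam M) = 0 := by
        rw [min_eq_left (h0.le.trans hM), max_eq_left h0.le]
      rw [hc]
      apply hshift p hp
      intro s
      rw [sub_zero]
      have := util_key2 hu (hf s).1 (show f s ≤ f s - lam by linarith)
      linarith
    · rcases le_or_gt lam M with h1 | h1
      · have hc : max 0 (min lam M) = lam := by
          rw [min_eq_left h1, max_eq_right h0]
        rw [hc]
      · have hc : max 0 (min lam M) = M := by
          rw [min_eq_right h1.le, max_eq_right hM]
        rw [hc]
        apply hshift p hp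
        intro s
        have := util_key1 hu (show f s - lam ≤ f s - M by linarith)
          (show f s - M ≤ 0 by linarith [(hf s).2])
        linarith
  -- uniform upper bound
  have hub : ∀ (p : S → ℝ), IsPMF p → ∀ lam : ℝ, φ p lam ≤ M := by
    intro p hp lam
    have h1 : ∑ s, p s * u (f s - lam) ≤ ∑ s, p s * (M - lam) := by
      apply Finset.sum_le_sum
      intro s _
      exact mul_le_mul_of_nonneg_left ((hle _).trans (by linarith [(hf s).2])) (hp.1 s)
    rw [← Finset.sum_mul, hp.2, one_mul] at h1
    simp only [hφ]
    linarith
  have hbdd : ∀ (p : S → ℝ), IsPMF p → BddAbove (Set.range (φ p)) := by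
    intro p hp
    exact ⟨M, by rintro x ⟨lam, rfl⟩; exact hub p hp lam⟩
  -- difference bound on [0, M]
  have hdiff : ∀ lam : ℝ, 0 ≤ lam → lam ≤ M → |φ P lam - φ Q lam| ≤ D := by
    intro lam h0 h1
    have heq : φ P lam - φ Q lam = ∑ s, (P s - Q s) * u (f s - lam) := by
      simp only [hφ]
      rw [add_sub_add_left_eq_sub, ← Finset.sum_sub_distrib]
      exact Finset.sum_congr rfl fun s _ => (sub_mul _ _ _).symm
    rw [heq]
    calc |∑ s, (P s - Q s) * u (f s - lam)|
        ≤ ∑ s, |(P s - Q s) * u (f s - lam)| := Finset.abs_sum_le_sum_abs _ _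
      _ ≤ ∑ s, |P s - Q s| * (-u (-M)) := by
          apply Finset.sum_le_sum
          intro s _
          rw [abs_mul]
          apply mul_le_mul_of_nonneg_left _ (abs_nonneg _)
          rw [abs_le]
          constructor
          · have : u (-M) ≤ u (f s - lam) := hmono (by linarith [(hf s).1])
            linarith
          · have h2 : u (f s - lam) ≤ f s - lam := hle _
            linarith [(hf s).2]
      _ = D := by rw [hD, Finset.sum_mul]
  -- main one-sided comparison
  have main : ∀ p q : S → ℝ, IsPMF p → IsPMF q →
      (∀ lam : ℝ, 0 ≤ lam → lam ≤ M → φ p lam - φ q lam ≤ D) →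
      OCE u p f ≤ OCE u q f + D := by
    intro p q hp hq hpq
    have hop : OCE u p f = ⨆ lam, φ p lam := rfl
    have hoq : OCE u q f = ⨆ lam, φ q lam := rfl
    rw [hop, hoq]
    apply ciSup_le
    intro lam
    set c := max 0 (min lam M) with hc
    have hc0 : (0:ℝ) ≤ c := le_max_left _ _
    have hcM : c ≤ M := max_le hM (min_le_right lam M)
    have h1 : φ p lam ≤ φ p c := hclamp p hp lam
    have h2 : φ p c - φ q c ≤ D := hpq c hc0 hcM
    have h3 : φ q c ≤ ⨆ lam, φ q lam := le_ciSup (hbdd q hq) c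
    linarith
  rw [abs_sub_le_iff]
  constructor
  · have := main P Q hP hQ (fun lam h0 h1 => (le_abs_self _).trans (hdiff lam h0 h1))
    linarith
  · have := main Q P hQ hP (fun lam h0 h1 =>
      (le_abs_self _).trans (by rw [abs_sub_comm]; exact hdiff lam h0 h1))
    linarith
end

section
/- (First-order optimality condition for the OCE and existence of a normalized subgradient selection, Equation (S222)) Let u be a utility function, P a probability mass function on a finite nonempty set S, M ≥ 0, g : S → ℝ with 0 ≤ g(s) ≤ M for all s, and λ* ∈ ℝ a point attaining the supremum defining OCE^u_P(g), i.e., OCE^u_P(g) = λ* + Σ_{s∈S} P(s)·u(g(s) − λ*). Then there exists Λ : S → ℝ such that: (i) for every s ∈ S, Λ(s) is a subgradient of u at g(s) − λ*, i.e., u(y) ≤ u(g(s) − λ*) + Λ(s)·(y − (g(s) − λ*)) for all y ∈ ℝ; (ii) Λ(s) ≥ 0 for all s; and (iii) Σ_{s∈S} P(s)·Λ(s) = 1. -/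
/-!
Since `u t ≤ t`, the objective `F lam = lam + ∑ s, P s * u (g s - lam)` is bounded above by
`∑ s, P s * g s`, so `lamstar` maximises it. Moving `lam` to the right moves every argument
`g s - lam` to the left, so the right derivative of `F` at `lamstar` is `1 - ∑ s, P s * u'₋`
and its left derivative is `1 - ∑ s, P s * u'₊` (one-sided derivatives of the concave `u` at
`g s - lamstar`). Fermat's rule gives `∑ s, P s * u'₊ ≤ 1 ≤ ∑ s, P s * u'₋`. Every slope in
`[u'₊, u'₋]` is a supergradient of the concave `u`, and the intermediate value theorem on the
segment from `u'₊` to `u'₋` selects one with weighted sum exactly `1`; it is nonnegative because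
`u` is nondecreasing (`0 ≤ u'₊`).
-/

open Set Filter Topology

namespace ConcaveOn

variable {D : Set ℝ} {f : ℝ → ℝ} {x y c : ℝ}

lemma differentiableWithinAt_Ioi_of_mem_interior (hf : ConcaveOn ℝ D f) (hx : x ∈ interior D) :
    DifferentiableWithinAt ℝ f (Ioi x) x := by
  simpa using (hf.neg.differentiableWithinAt_Ioi_of_mem_interior hx).neg

lemma differentiableWithinAt_Iio_of_mem_interior (hf : ConcaveOn ℝ D f) (hx : x ∈ interior D) :
    DifferentiableWithinAt ℝ f (Iio x) x := by
  simpa using (hf.neg.differentiableWithinAt_Iio_of_mem_interior hx).neg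

lemma rightDeriv_le_leftDeriv_of_mem_interior (hf : ConcaveOn ℝ D f) (hx : x ∈ interior D) :
    derivWithin f (Ioi x) x ≤ derivWithin f (Iio x) x := by
  simpa [derivWithin.neg] using hf.neg.leftDeriv_le_rightDeriv_of_mem_interior hx

lemma le_add_mul_sub_of_mem_interior (hf : ConcaveOn ℝ D f) (hx : x ∈ interior D) (hy : y ∈ D)
    (hc : c ∈ Icc (derivWithin f (Ioi x) x) (derivWithin f (Iio x) x)) :
    f y ≤ f x + c * (y - x) := by
  rcases lt_trichotomy y x with hyx | rfl | hxy
  · have h := hc.2.trans <| hf.leftDeriv_le_slope hy (interior_subset hx) hyx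
      (hf.differentiableWithinAt_Iio_of_mem_interior hx)
    rw [slope_def_field, le_div_iff₀ (sub_pos.2 hyx)] at h
    linarith
  · simp
  · have h := (hf.slope_le_rightDeriv (interior_subset hx) hy hxy
      (hf.differentiableWithinAt_Ioi_of_mem_interior hx)).trans hc.1
    rw [slope_def_field, div_le_iff₀ (sub_pos.2 hxy)] at h
    linarith

end ConcaveOn

section FirstOrder

variable {f : ℝ → ℝ} {f' a : ℝ}

lemma HasDerivWithinAt.nonpos_of_isMaxOn_Ioi (hf : HasDerivWithinAt f f' (Ioi a) a)
    (hmax : IsMaxOn f (Ioi a) a) : f' ≤ 0 := by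
  refine le_of_tendsto ((hasDerivWithinAt_iff_tendsto_slope' self_notMem_Ioi).1 hf) ?_
  filter_upwards [self_mem_nhdsWithin] with x (hx : a < x)
  rw [slope_def_field]
  exact div_nonpos_of_nonpos_of_nonneg (sub_nonpos.2 (hmax hx)) (sub_pos.2 hx).le

lemma HasDerivWithinAt.nonneg_of_isMaxOn_Iio (hf : HasDerivWithinAt f f' (Iio a) a)
    (hmax : IsMaxOn f (Iio a) a) : 0 ≤ f' := by
  refine ge_of_tendsto ((hasDerivWithinAt_iff_tendsto_slope' self_notMem_Iio).1 hf) ?_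
  filter_upwards [self_mem_nhdsWithin] with x (hx : x < a)
  rw [slope_def_field]
  exact div_nonneg_of_nonpos (sub_nonpos.2 (hmax hx)) (sub_neg.2 hx).le

end FirstOrder

lemma exists_mem_Icc_sum_mul_eq {ι : Type*} [Fintype ι] {w a b : ι → ℝ} {c : ℝ}
    (hab : ∀ i, a i ≤ b i) (ha : ∑ i, w i * a i ≤ c) (hb : c ≤ ∑ i, w i * b i) :
    ∃ x : ι → ℝ, (∀ i, x i ∈ Icc (a i) (b i)) ∧ ∑ i, w i * x i = c := by
  obtain ⟨t, ⟨ht0, ht1⟩, hsum⟩ :=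
    intermediate_value_Icc zero_le_one (f := fun t ↦ ∑ i, w i * (a i + t * (b i - a i)))
      (by fun_prop) ⟨by simpa using ha, by simpa using hb⟩
  refine ⟨fun i ↦ a i + t * (b i - a i), fun i ↦ ⟨?_, ?_⟩, hsum⟩
  · nlinarith [hab i]
  · nlinarith [hab i]

section OCE

variable {S : Type*} [Fintype S] {u : ℝ → ℝ} {P g : S → ℝ}

noncomputable def oceObjective (u : ℝ → ℝ) (P g : S → ℝ) (lam : ℝ) : ℝ :=
  lam + ∑ s, P s * u (g s - lam)

lemma oceObjective_le_sum_mul (hu : ∀ t, u t ≤ t) (hP : IsPMF P) (lam : ℝ) :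
    oceObjective u P g lam ≤ ∑ s, P s * g s := by
  have h : ∑ s, P s * u (g s - lam) ≤ ∑ s, P s * (g s - lam) :=
    Finset.sum_le_sum fun s _ ↦ mul_le_mul_of_nonneg_left (hu _) (hP.1 s)
  simp only [mul_sub, Finset.sum_sub_distrib, ← Finset.sum_mul, hP.2, one_mul] at h
  unfold oceObjective
  linarith

lemma isMaxOn_oceObjective_of_OCE_eq (hu : ∀ t, u t ≤ t) (hP : IsPMF P) {lamstar : ℝ}
    (hopt : OCE u P g = oceObjective u P g lamstar) : IsMaxOn (oceObjective u P g) univ lamstar :=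
  fun lam _ ↦ hopt ▸ le_ciSup ⟨_, forall_mem_range.2 (oceObjective_le_sum_mul hu hP)⟩ lam

lemma hasDerivWithinAt_oceObjective {d : S → ℝ} {lam : ℝ} {t : Set ℝ} {T : S → Set ℝ}
    (hT : ∀ s, MapsTo (g s - ·) t (T s)) (hu : ∀ s, HasDerivWithinAt u (d s) (T s) (g s - lam)) :
    HasDerivWithinAt (oceObjective u P g) (1 - ∑ s, P s * d s) t lam := by
  have hterm : ∀ s ∈ Finset.univ,
      HasDerivWithinAt (fun l ↦ P s * u (g s - l)) (-(P s * d s)) t lam := fun s _ ↦ by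
    simpa using (((hu s).comp lam ((hasDerivWithinAt_id lam t).const_sub (g s)) (hT s)).const_mul
      (P s))
  have h := (hasDerivWithinAt_id lam t).fun_add (HasDerivWithinAt.fun_sum hterm)
  rwa [Finset.sum_neg_distrib, ← sub_eq_add_neg] at h

lemma sum_mul_rightDeriv_le_one_le_sum_mul_leftDeriv_of_isMaxOn {lamstar : ℝ}
    (hu : ConcaveOn ℝ univ u) (hmax : IsMaxOn (oceObjective u P g) univ lamstar) :
    ∑ s, P s * derivWithin u (Ioi (g s - lamstar)) (g s - lamstar) ≤ 1 ∧
      1 ≤ ∑ s, P s * derivWithin u (Iio (g s - lamstar)) (g s - lamstar) := by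
  have hint : ∀ x : ℝ, x ∈ interior univ := by simp
  constructor
  · have h := hasDerivWithinAt_oceObjective (P := P) (lam := lamstar)
      (fun s _ hl ↦ sub_lt_sub_left hl (g s))
      fun s ↦ (hu.differentiableWithinAt_Ioi_of_mem_interior (hint _)).hasDerivWithinAt
    linarith [h.nonneg_of_isMaxOn_Iio (hmax.on_subset (subset_univ _))]
  · have h := hasDerivWithinAt_oceObjective (P := P) (lam := lamstar)
      (fun s _ hl ↦ sub_lt_sub_left hl (g s))
      fun s ↦ (hu.differentiableWithinAt_Iio_of_mem_interior (hint _)).hasDerivWithinAt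
    linarith [h.nonpos_of_isMaxOn_Ioi (hmax.on_subset (subset_univ _))]

end OCE

theorem oce_subgradient_selection_general {S : Type*} [Fintype S]
    (u : ℝ → ℝ) (hu : IsUtility u) (P : S → ℝ) (hP : IsPMF P)
    (g : S → ℝ)
    (lamstar : ℝ)
    (hopt : OCE u P g = lamstar + ∑ s, P s * u (g s - lamstar)) :
    ∃ Λ : S → ℝ,
      (∀ s, ∀ y : ℝ, u y ≤ u (g s - lamstar) + Λ s * (y - (g s - lamstar))) ∧
      (∀ s, 0 ≤ Λ s) ∧
      ∑ s, P s * Λ s = 1 := by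
  obtain ⟨hmono, hconc, -, hle⟩ := hu
  have hint : ∀ x : ℝ, x ∈ interior univ := by simp
  obtain ⟨hright, hleft⟩ := sum_mul_rightDeriv_le_one_le_sum_mul_leftDeriv_of_isMaxOn hconc
    (isMaxOn_oceObjective_of_OCE_eq hle hP hopt)
  obtain ⟨Λ, hΛ, hsum⟩ := exists_mem_Icc_sum_mul_eq
    (fun s ↦ hconc.rightDeriv_le_leftDeriv_of_mem_interior (hint _)) hright hleft
  exact ⟨Λ, fun s y ↦ hconc.le_add_mul_sub_of_mem_interior (hint _) (mem_univ y) (hΛ s),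
    fun s ↦ (hmono.monotoneOn _).derivWithin_nonneg.trans (hΛ s).1, hsum⟩

/-- First-order optimality condition for the OCE: existence of a normalized
subgradient selection. -/
theorem oce_subgradient_selection {S : Type*} [Fintype S] [Nonempty S]
    (u : ℝ → ℝ) (hu : IsUtility u) (P : S → ℝ) (hP : IsPMF P)
    (M : ℝ) (hM : 0 ≤ M) (g : S → ℝ) (hg : ∀ s, g s ∈ Set.Icc (0:ℝ) M)
    (lamstar : ℝ)
    (hopt : OCE u P g = lamstar + ∑ s, P s * u (g s - lamstar)) :
    ∃ Λ : S → ℝ,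
      (∀ s, ∀ y : ℝ, u y ≤ u (g s - lamstar) + Λ s * (y - (g s - lamstar))) ∧
      (∀ s, 0 ≤ Λ s) ∧
      ∑ s, P s * Λ s = 1 :=
  oce_subgradient_selection_general u hu P hP g lamstar hopt
end

section
/- (Lemma B.7: linearization of the OCE via change of measure) Let u be a utility function, P a probability mass function on a finite nonempty set S, M ≥ 0, and V, V̂ : S → ℝ with values in [0, M]. Let λ* ∈ [0, M] satisfy OCE^u_P(V) = λ* + Σ_{s∈S} P(s)·u(V(s) − λ*), and let Λ : S → ℝ satisfy: (i) for every s ∈ S and every y ∈ ℝ, u(y) ≤ u(V(s) − λ*) + Λ(s)·(y − (V(s) − λ*)); and (ii) Σ_{s∈S} P(s)·Λ(s) = 1. Then OCE^u_P(V̂) − OCE^u_P(V) ≤ Σ_{s∈S} P(s)·Λ(s)·(V̂(s) − V(s)). -/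
/-- Linearization of the OCE via change of measure. -/
theorem oce_linearization {S : Type*} [Fintype S] [Nonempty S]
    (u : ℝ → ℝ) (hu : IsUtility u) (P : S → ℝ) (hP : IsPMF P)
    (M : ℝ) (hM : 0 ≤ M)
    (V Vhat : S → ℝ) (hV : ∀ s, V s ∈ Set.Icc (0:ℝ) M) (hVhat : ∀ s, Vhat s ∈ Set.Icc (0:ℝ) M)
    (lamstar : ℝ) (hlam : lamstar ∈ Set.Icc (0:ℝ) M)
    (hopt : OCE u P V = lamstar + ∑ s, P s * u (V s - lamstar))
    (Λ : S → ℝ)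
    (hsub : ∀ s, ∀ y : ℝ, u y ≤ u (V s - lamstar) + Λ s * (y - (V s - lamstar)))
    (hnorm : ∑ s, P s * Λ s = 1) :
    OCE u P Vhat - OCE u P V ≤ ∑ s, P s * Λ s * (Vhat s - V s) := by
  rw [sub_le_iff_le_add, add_comm]
  apply ciSup_le
  intro lam
  have h1 : ∑ s, P s * u (Vhat s - lam)
      ≤ ∑ s, P s * (u (V s - lamstar) + Λ s * ((Vhat s - lam) - (V s - lamstar))) :=
    Finset.sum_le_sum fun s _ => mul_le_mul_of_nonneg_left (hsub s _) (hP.1 s)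
  have h2 : ∑ s, P s * (u (V s - lamstar) + Λ s * ((Vhat s - lam) - (V s - lamstar)))
      = (∑ s, P s * u (V s - lamstar)) + (∑ s, P s * Λ s * (Vhat s - V s))
        + (lamstar - lam) * ∑ s, P s * Λ s := by
    rw [Finset.mul_sum, ← Finset.sum_add_distrib, ← Finset.sum_add_distrib]
    exact Finset.sum_congr rfl fun s _ => by ring
  rw [h2, hnorm, mul_one] at h1
  rw [hopt]
  linarith
end

section
/- (Lemma B.3: optimism of the OCE value-iteration backup) Let u be a utility function. In the finite-horizon MDP setting, let P̂_h(·|s,a) be probability mass functions on S (estimated transitions) and b_h(s,a) ≥ 0 (bonuses) for each h, s, a. Define the optimal value functions by V*_{H+1}(s) = 0, Q*_h(s,a) = r_h(s,a) + OCE^u_{P_h(·|s,a)}(V*_{h+1}), V*_h(s) = max_{a∈A} Q*_h(s,a), and the optimistic value functions by V̂_{H+1}(s) = 0, Q̂_h(s,a) = min{ r_h(s,a) + OCE^u_{P̂_h(·|s,a)}(V̂_{h+1}) + b_h(s,a), H − h + 1 }, V̂_h(s) = max_{a∈A} Q̂_h(s,a). Assume that for all h, s, a: OCE^u_{P_h(·|s,a)}(V*_{h+1})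 − OCE^u_{P̂_h(·|s,a)}(V*_{h+1}) ≤ b_h(s,a). Then Q̂_h(s,a) ≥ Q*_h(s,a) and V̂_h(s) ≥ V*_h(s) for all h ∈ {1,…,H}, s ∈ S, a ∈ A. -/
/-- Recursive OCE value function of a policy, indexed by the number `t` of remaining
steps: `Vpi u H r P π t` is the value function `V_h^π` at step `h = H + 1 - t`.
In particular `Vpi u H r P π 0 = V_{H+1}^π = 0`. -/
noncomputable def Vpi {S A : Type*} [Fintype S] (u : ℝ → ℝ) (H : ℕ)
    (r : ℕ → S → A → ℝ) (P : ℕ → S → A → S → ℝ) (π : ℕ → S → A) : ℕ → S → ℝ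
  | 0, _ => 0
  | t + 1, s =>
      r (H - t) s (π (H - t) s) +
        OCE u (P (H - t) s (π (H - t) s)) (Vpi u H r P π t)

/-- Recursive OCE state-action value function of a policy at step `h`:
`Q_h^π(s,a) = r_h(s,a) + OCE_{P_h(·|s,a)}(V_{h+1}^π)`, where `V_{h+1}^π = Vpi … (H - h)`. -/
noncomputable def Qpi {S A : Type*} [Fintype S] (u : ℝ → ℝ) (H : ℕ)
    (r : ℕ → S → A → ℝ) (P : ℕ → S → A → S → ℝ) (π : ℕ → S → A)
    (h : ℕ) (s : S) (a : A) : ℝ :=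
  r h s a + OCE u (P h s a) (Vpi u H r P π (H - h))

/-- Optimal recursive OCE value function, indexed by the number `t` of remaining steps:
`Vstar u H r P t` is `V*_h` at step `h = H + 1 - t`, with `V*_{H+1} = 0`. -/
noncomputable def Vstar {S A : Type*} [Fintype S] [Fintype A] [Nonempty A]
    (u : ℝ → ℝ) (H : ℕ) (r : ℕ → S → A → ℝ) (P : ℕ → S → A → S → ℝ) : ℕ → S → ℝ
  | 0, _ => 0
  | t + 1, s =>
      ⨆ a : A, (r (H - t) s a + OCE u (P (H - t) s a) (Vstar u H r P t))

/-- Optimal state-action value function at step `h`: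
`Q*_h(s,a) = r_h(s,a) + OCE_{P_h(·|s,a)}(V*_{h+1})`. -/
noncomputable def Qstar {S A : Type*} [Fintype S] [Fintype A] [Nonempty A]
    (u : ℝ → ℝ) (H : ℕ) (r : ℕ → S → A → ℝ) (P : ℕ → S → A → S → ℝ)
    (h : ℕ) (s : S) (a : A) : ℝ :=
  r h s a + OCE u (P h s a) (Vstar u H r P (H - h))

/-- Optimistic (truncated, bonus-augmented) value function built from estimated
transitions `Phat` and bonuses `b`, indexed by the number `t` of remaining steps:
`Vhat … t` is `V̂_h` at step `h = H + 1 - t`; the truncation level `H − h + 1` equals `t + 1`. -/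
noncomputable def Vhat {S A : Type*} [Fintype S] [Fintype A] [Nonempty A]
    (u : ℝ → ℝ) (H : ℕ) (r : ℕ → S → A → ℝ) (Phat : ℕ → S → A → S → ℝ)
    (b : ℕ → S → A → ℝ) : ℕ → S → ℝ
  | 0, _ => 0
  | t + 1, s =>
      ⨆ a : A,
        min (r (H - t) s a + OCE u (Phat (H - t) s a) (Vhat u H r Phat b t) + b (H - t) s a)
          ((t : ℝ) + 1)

/-- Optimistic state-action value function at step `h`:
`Q̂_h(s,a) = min { r_h(s,a) + OCE_{P̂_h(·|s,a)}(V̂_{h+1}) + b_h(s,a), H − h + 1 }`. -/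
noncomputable def Qhat {S A : Type*} [Fintype S] [Fintype A] [Nonempty A]
    (u : ℝ → ℝ) (H : ℕ) (r : ℕ → S → A → ℝ) (Phat : ℕ → S → A → S → ℝ)
    (b : ℕ → S → A → ℝ) (h : ℕ) (s : S) (a : A) : ℝ :=
  min (r h s a + OCE u (Phat h s a) (Vhat u H r Phat b (H - h)) + b h s a)
    ((H : ℝ) - h + 1)


lemma oce_bddAbove {S : Type*} [Fintype S] {u : ℝ → ℝ} {P g : S → ℝ}
    (hu : IsUtility u) (hP : IsPMF P) :
    BddAbove (Set.range fun lam : ℝ => lam + ∑ s, P s * u (g s - lam)) := by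
  refine ⟨∑ s, P s * g s, ?_⟩
  rintro x ⟨lam, rfl⟩
  dsimp only
  have h1 : ∑ s, P s * u (g s - lam) ≤ ∑ s, P s * (g s - lam) :=
    Finset.sum_le_sum fun s _ => mul_le_mul_of_nonneg_left (hu.2.2.2 _) (hP.1 s)
  have h2 : ∑ s, P s * (g s - lam) = (∑ s, P s * g s) - lam := by
    simp only [mul_sub]
    rw [Finset.sum_sub_distrib, ← Finset.sum_mul, hP.2, one_mul]
  linarith

lemma oce_le {S : Type*} [Fintype S] {u : ℝ → ℝ} {P g : S → ℝ} {M : ℝ}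
    (hu : IsUtility u) (hP : IsPMF P) (hg : ∀ s, g s ≤ M) : OCE u P g ≤ M := by
  refine ciSup_le fun lam => ?_
  have h1 : ∑ s, P s * u (g s - lam) ≤ ∑ s, P s * (M - lam) :=
    Finset.sum_le_sum fun s _ => mul_le_mul_of_nonneg_left
      ((hu.2.2.2 _).trans (by linarith [hg s])) (hP.1 s)
  have h2 : ∑ s, P s * (M - lam) = M - lam := by
    rw [← Finset.sum_mul, hP.2, one_mul]
  linarith

lemma oce_mono {S : Type*} [Fintype S] {u : ℝ → ℝ} {P : S → ℝ} {g g' : S → ℝ}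
    (hu : IsUtility u) (hP : IsPMF P) (hgg : ∀ s, g s ≤ g' s) :
    OCE u P g ≤ OCE u P g' := by
  refine ciSup_le fun lam => le_trans ?_ (le_ciSup (oce_bddAbove hu hP) lam)
  have : ∑ s, P s * u (g s - lam) ≤ ∑ s, P s * u (g' s - lam) :=
    Finset.sum_le_sum fun s _ => mul_le_mul_of_nonneg_left
      (hu.1 (by linarith [hgg s])) (hP.1 s)
  linarith

lemma vstar_le {S A : Type*} [Fintype S] [Fintype A] [Nonempty A] {u : ℝ → ℝ} {H : ℕ}
    {r : ℕ → S → A → ℝ} {P : ℕ → S → A → S → ℝ}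
    (hu : IsUtility u) (hr : ∀ h s a, r h s a ∈ Set.Icc (0:ℝ) 1)
    (hP : ∀ h s a, IsPMF (P h s a)) :
    ∀ t (s : S), Vstar u H r P t s ≤ (t : ℝ)
  | 0, s => by simp [Vstar]
  | t + 1, s => by
    refine ciSup_le fun a => ?_
    have h1 : OCE u (P (H - t) s a) (Vstar u H r P t) ≤ (t : ℝ) :=
      oce_le hu (hP _ _ _) (fun s' => vstar_le hu hr hP t s')
    have h2 := (hr (H - t) s a).2
    push_cast
    linarith

/-- Optimism of the OCE value-iteration backup: if the bonuses dominate the OCE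
estimation error of the optimal next-state value, then the optimistic value
functions dominate the optimal ones. -/
theorem oce_vi_optimism {S A : Type*} [Fintype S] [Nonempty S] [Fintype A] [Nonempty A]
    (u : ℝ → ℝ) (hu : IsUtility u) (H : ℕ) (hH : 1 ≤ H)
    (r : ℕ → S → A → ℝ) (hr : ∀ h s a, r h s a ∈ Set.Icc (0:ℝ) 1)
    (P : ℕ → S → A → S → ℝ) (hP : ∀ h s a, IsPMF (P h s a))
    (Phat : ℕ → S → A → S → ℝ) (hPhat : ∀ h s a, IsPMF (Phat h s a))
    (b : ℕ → S → A → ℝ) (hb : ∀ h s a, 0 ≤ b h s a)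
    (hconc : ∀ h, 1 ≤ h → h ≤ H → ∀ (s : S) (a : A),
      OCE u (P h s a) (Vstar u H r P (H - h)) -
        OCE u (Phat h s a) (Vstar u H r P (H - h)) ≤ b h s a)
    (h : ℕ) (hh1 : 1 ≤ h) (hhH : h ≤ H) (s : S) (a : A) :
    Qstar u H r P h s a ≤ Qhat u H r Phat b h s a ∧
    Vstar u H r P (H + 1 - h) s ≤ Vhat u H r Phat b (H + 1 - h) s := by
  have hkey : ∀ t, t ≤ H → ∀ s : S, Vstar u H r P t s ≤ Vhat u H r Phat b t s := by
    intro t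
    induction t with
    | zero => intro _ s; simp [Vstar, Vhat]
    | succ t ih =>
      intro htH s
      have ht : t ≤ H := Nat.le_of_succ_le htH
      have hstep1 : 1 ≤ H - t := by omega
      have hstepH : H - t ≤ H := Nat.sub_le _ _
      have hHt : H - (H - t) = t := by omega
      rw [Vstar, Vhat]
      refine ciSup_mono ⟨(t:ℝ)+1, ?_⟩ fun a => ?_
      · rintro x ⟨a, rfl⟩; exact min_le_right _ _
      · refine le_min ?_ ?_
        · have h1 := hconc (H - t) hstep1 hstepH s a
          rw [hHt] at h1
          have h2 : OCE u (Phat (H-t) s a) (Vstar u H r P t) ≤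
              OCE u (Phat (H-t) s a) (Vhat u H r Phat b t) :=
            oce_mono hu (hPhat _ _ _) (fun s' => ih ht s')
          linarith
        · have h1 : OCE u (P (H-t) s a) (Vstar u H r P t) ≤ (t:ℝ) :=
            oce_le hu (hP _ _ _) (fun s' => vstar_le hu hr hP t s')
          have h2 := (hr (H-t) s a).2
          linarith
  constructor
  · rw [Qstar, Qhat]
    refine le_min ?_ ?_
    · have h1 := hconc h hh1 hhH s a
      have h2 : OCE u (Phat h s a) (Vstar u H r P (H-h)) ≤
          OCE u (Phat h s a) (Vhat u H r Phat b (H-h)) :=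
        oce_mono hu (hPhat _ _ _) (fun s' => hkey (H-h) (Nat.sub_le _ _) s')
      linarith
    · have h1 : OCE u (P h s a) (Vstar u H r P (H-h)) ≤ ((H-h : ℕ):ℝ) :=
        oce_le hu (hP _ _ _) (fun s' => vstar_le hu hr hP _ s')
      have h2 := (hr h s a).2
      have h3 : ((H-h:ℕ):ℝ) = (H:ℝ) - h := by
        rw [Nat.cast_sub hhH]
      linarith
  · have heq : H + 1 - h = (H - h) + 1 := by omega
    rw [heq]
    exact hkey ((H-h)+1) (by omega) s
end

section
/- (Lemma B.9: visit-count harmonic sum bound) Let X be a finite set with |X| ≥ 2, let K ≥ 1, and let x₁, …, x_K be a sequence of elements of X. For each k ∈ {1,…,K} let N_k = |{ i : 1 ≤ i < k, x_i = x_k }| be the number of occurrences of x_k strictly before index k. Then Σ_{k=1}^K 1/max{1, N_k} ≤ |X| · log(3K), where log denotes the natural logarithm. -/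
/-!
Group the indices by the value they visit. A value visited `m` times contributes
`1 + 1 + 1/2 + ⋯ + 1/(m-1) ≤ 1 + log (2m)`, using the midpoint estimate
`1/(n+1) ≤ log (2n+3) - log (2n+1)` to telescope the harmonic sum. Concavity of `log` and
`∑ m = K` bound the total over the `D ≤ |X|` visited values by `D (1 + log (2K/D))`, which is at
most `|X| log (3K)`: for `D = 1` because `|X| ≥ 2`, for `D ≥ 2` because `e < 3`.
-/

open Real Finset

lemma two_mul_sub_div_add_le_log_sub_log {a b : ℝ} (ha : 0 < a) (hab : a ≤ b) :
    2 * (b - a) / (b + a) ≤ log b - log a := by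
  have hb : 0 < b := ha.trans_le hab
  -- `log b - log a = log (1 + t) - log (1 - t) = 2t + 2t³/3 + ⋯`; keep the first term.
  set t := (b - a) / (b + a) with ht
  have h0 : 0 ≤ t := div_nonneg (by linarith) (by linarith)
  have h1 : t < 1 := (div_lt_one (by linarith)).2 (by linarith)
  have hseries := hasSum_log_sub_log_of_abs_lt_one (x := t) (by rwa [abs_of_nonneg h0])
  have hfirst := le_hasSum hseries 0 (fun j _ => by positivity)
  have hplus : 1 + t = 2 * b / (b + a) := by rw [ht]; field_simp; ring
  have hminus : 1 - t = 2 * a / (b + a) := by rw [ht]; field_simp; ring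
  rw [hplus, hminus, log_div (by positivity) (by positivity),
    log_div (by positivity) (by positivity), log_mul two_ne_zero hb.ne',
    log_mul two_ne_zero ha.ne'] at hfirst
  rw [mul_div_assoc]
  simp only [Nat.cast_zero, mul_zero, zero_add, div_one, mul_one, pow_one] at hfirst
  linarith

lemma sum_range_one_div_succ_le_log (n : ℕ) :
    ∑ j ∈ range n, 1 / ((j : ℝ) + 1) ≤ log (2 * n + 1) := by
  induction n with
  | zero => simp
  | succ n ih =>
    have hstep := two_mul_sub_div_add_le_log_sub_log (a := 2 * n + 1) (b := 2 * n + 3)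
      (by positivity) (by linarith)
    have hterm : 2 * ((2 * n + 3) - (2 * n + 1)) / ((2 * n + 3) + (2 * n + 1)) =
        1 / ((n : ℝ) + 1) := by
      field_simp; ring
    rw [sum_range_succ, Nat.cast_succ, show 2 * ((n : ℝ) + 1) + 1 = 2 * n + 3 by ring]
    linarith

lemma sum_range_one_div_max_one_le_log {m : ℕ} (hm : 1 ≤ m) :
    ∑ j ∈ range m, (1 : ℝ) / (max 1 j : ℕ) ≤ 1 + log (2 * m) := by
  obtain ⟨n, rfl⟩ := Nat.exists_eq_add_of_le' hm
  have hlog : log (2 * n + 1) ≤ log (2 * ((n : ℝ) + 1)) :=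
    log_le_log (by positivity) (by linarith)
  rw [sum_range_succ']
  simp only [Nat.le_add_left, max_eq_right, Nat.cast_succ, max_eq_left zero_le_one, Nat.cast_one,
    div_one]
  linarith [sum_range_one_div_succ_le_log n]

lemma sum_card_filter_lt_eq_sum_range {α M : Type*} [LinearOrder α] [AddCommMonoid M]
    (s : Finset α) (f : ℕ → M) :
    ∑ k ∈ s, f #{i ∈ s | i < k} = ∑ j ∈ range #s, f j := by
  induction s using Finset.induction_on_max with
  | empty => simp
  | insert a s ha ih =>
    have hna : a ∉ s := fun h => lt_irrefl a (ha a h)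
    have hlt_a : {i ∈ insert a s | i < a} = s := by
      rw [filter_insert, if_neg (lt_irrefl a), filter_true_of_mem ha]
    have hlt_k : ∀ k ∈ s, {i ∈ insert a s | i < k} = {i ∈ s | i < k} := fun k hk => by
      rw [filter_insert, if_neg (ha k hk).not_gt]
    rw [sum_insert hna, card_insert_of_notMem hna, sum_range_succ, hlt_a,
      sum_congr rfl fun k hk => by rw [hlt_k k hk], ih, add_comm]

lemma sum_Icc_card_earlier_eq_sum_fibers {X M : Type*} [DecidableEq X] [AddCommMonoid M]
    (x : ℕ → X) (K : ℕ) (f : ℕ → M) :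
    ∑ k ∈ Icc 1 K, f #{i ∈ Ico 1 k | x i = x k} =
      ∑ v ∈ (Icc 1 K).image x, ∑ j ∈ range #{k ∈ Icc 1 K | x k = v}, f j := by
  rw [← sum_fiberwise_of_maps_to fun k hk => mem_image_of_mem x hk]
  refine sum_congr rfl fun v _ => ?_
  rw [← sum_card_filter_lt_eq_sum_range]
  refine sum_congr rfl fun k hk => ?_
  rw [mem_filter, mem_Icc] at hk
  congr 2
  ext i
  by_cases hi : x i = v
  · simp only [mem_filter, mem_Ico, mem_Icc, hk.2, hi, and_true]
    omega
  · simp [hk.2, hi]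

lemma sum_log_le_card_mul_log_sum_div {ι : Type*} (s : Finset ι) (f : ι → ℝ)
    (hf : ∀ i ∈ s, 0 < f i) :
    ∑ i ∈ s, log (f i) ≤ #s * log ((∑ i ∈ s, f i) / #s) := by
  rcases s.eq_empty_or_nonempty with rfl | hs
  · simp
  have hcard : (0 : ℝ) < #s := by exact_mod_cast hs.card_pos
  have hjensen := strictConcaveOn_log_Ioi.concaveOn.le_map_sum (t := s)
    (w := fun _ => (#s : ℝ)⁻¹) (p := f) (fun _ _ => by positivity)
    (by rw [sum_const, nsmul_eq_mul, mul_inv_cancel₀ hcard.ne']) hf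
  simp only [smul_eq_mul, ← mul_sum] at hjensen
  rw [inv_mul_eq_div, inv_mul_eq_div, div_le_iff₀' hcard] at hjensen
  exact hjensen

lemma card_mul_one_add_log_le {D C K : ℕ} (hD : 1 ≤ D) (hDC : D ≤ C) (hC : 2 ≤ C)
    (hK : 1 ≤ K) :
    (D : ℝ) * (1 + log (2 * K / D)) ≤ C * log (3 * K) := by
  have hK0 : (0 : ℝ) < K := by exact_mod_cast hK
  have hD0 : (0 : ℝ) < D := by exact_mod_cast hD
  have hlogK : 0 ≤ log K := log_nonneg (by exact_mod_cast hK)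
  have hlog3 := log_three_gt_d9
  rw [log_div (by positivity) hD0.ne', log_mul two_ne_zero hK0.ne', log_mul three_ne_zero hK0.ne']
  rcases hD.eq_or_lt with rfl | hD2
  · have hlog2 := log_two_lt_d9
    have hC' : (2 : ℝ) ≤ C := by exact_mod_cast hC
    norm_num at hlog2 hlog3 ⊢
    nlinarith
  · have hlogD : log 2 ≤ log D := log_le_log two_pos (by exact_mod_cast hD2)
    have hDC' : (D : ℝ) ≤ C := by exact_mod_cast hDC
    norm_num at hlog3
    calc (D : ℝ) * (1 + (log 2 + log K - log D)) ≤ D * (log 3 + log K) :=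
          mul_le_mul_of_nonneg_left (by linarith) hD0.le
      _ ≤ C * (log 3 + log K) := by gcongr

/-- Visit-count harmonic sum bound: for a sequence `x 1, …, x K` in a finite set `X`
with `|X| ≥ 2`, letting `N k` be the number of previous occurrences of `x k`,
we have `∑_{k=1}^K 1 / max 1 (N k) ≤ |X| * log (3 K)`. -/
theorem harmonic_visit_bound {X : Type*} [Fintype X] [DecidableEq X]
    (hX : 2 ≤ Fintype.card X) (K : ℕ) (hK : 1 ≤ K) (x : ℕ → X) :
    ∑ k ∈ Finset.Icc 1 K,
      (1 : ℝ) / ((max 1 (((Finset.Ico 1 k).filter (fun i => x i = x k)).card) : ℕ) : ℝ) ≤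
      (Fintype.card X : ℝ) * Real.log (3 * K) := by
  set T := (Icc 1 K).image x
  set m : X → ℕ := fun v => #{k ∈ Icc 1 K | x k = v}
  have hm : ∀ v ∈ T, 1 ≤ m v := by
    intro v hv
    obtain ⟨k, hk, rfl⟩ := mem_image.1 hv
    exact card_pos.2 ⟨k, mem_filter.2 ⟨hk, rfl⟩⟩
  have hmass : ∑ v ∈ T, (m v : ℝ) = K := by
    rw [← Nat.cast_sum, ← card_eq_sum_card_image, Nat.card_Icc, Nat.add_sub_cancel]
  have hT : 1 ≤ #T := card_pos.2 ((nonempty_Icc.2 hK).image x)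
  calc _ = ∑ v ∈ T, ∑ j ∈ range (m v), (1 : ℝ) / (max 1 j : ℕ) :=
        sum_Icc_card_earlier_eq_sum_fibers x K _
    _ ≤ ∑ v ∈ T, (1 + log (2 * m v)) :=
      sum_le_sum fun v hv => sum_range_one_div_max_one_le_log (hm v hv)
    _ = #T + ∑ v ∈ T, log (2 * m v) := by rw [sum_add_distrib, sum_const, nsmul_one]
    _ ≤ #T + #T * log ((∑ v ∈ T, 2 * (m v : ℝ)) / #T) := by
      gcongr
      exact sum_log_le_card_mul_log_sum_div T _ fun v hv => by
        have := hm v hv; positivity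
    _ = #T * (1 + log (2 * K / #T)) := by rw [← mul_sum, hmass]; ring
    _ ≤ Fintype.card X * log (3 * K) := card_mul_one_add_log_le hT (card_le_univ T) hX hK
end

section
/- (Lemma C.1: quadratic bound on the Bernoulli KL divergence) Fix a constant c₁ ≥ 2. If p ∈ (0, 1 − 1/c₁] and ε ∈ [0, ((1 − 2p) + √(1 − 4p/c₁))/2], then p + ε < 1 and kl(p, p + ε) ≤ c₁·ε²/p. -/
/-- Kullback–Leibler divergence between Bernoulli distributions with success
probabilities `p` and `q`. -/
noncomputable def klBernoulli (p q : ℝ) : ℝ :=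
  p * Real.log (p / q) + (1 - p) * Real.log ((1 - p) / (1 - q))

/-- Quadratic bound on the Bernoulli KL divergence (Lemma C.1). -/
theorem kl_quadratic_bound (c₁ : ℝ) (hc₁ : 2 ≤ c₁)
    (p : ℝ) (hp : p ∈ Set.Ioc (0:ℝ) (1 - 1 / c₁))
    (ε : ℝ) (hε : ε ∈ Set.Icc (0:ℝ) (((1 - 2 * p) + Real.sqrt (1 - 4 * p / c₁)) / 2)) :
    p + ε < 1 ∧ klBernoulli p (p + ε) ≤ c₁ * ε ^ 2 / p := by
  obtain ⟨hp0, hp1⟩ := hp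
  obtain ⟨hε0, hε1⟩ := hε
  have hc0 : (0:ℝ) < c₁ := by linarith
  have hpc : p * c₁ ≤ c₁ - 1 := by
    have h := mul_le_mul_of_nonneg_right hp1 hc0.le
    rw [sub_mul, one_mul, div_mul_cancel₀ _ hc0.ne'] at h
    exact h
  have h4p : 4 * p ≤ c₁ := by nlinarith [sq_nonneg (c₁ - 2)]
  have harg : 0 ≤ 1 - 4 * p / c₁ := by
    have : 4 * p / c₁ ≤ 1 := by rw [div_le_one hc0]; linarith
    linarith
  set s := Real.sqrt (1 - 4 * p / c₁) with hsdef
  clear_value s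
  have hs0 : 0 ≤ s := hsdef ▸ Real.sqrt_nonneg _
  have hs2 : s ^ 2 = 1 - 4 * (p / c₁) := by
    rw [hsdef, Real.sq_sqrt harg]; ring
  have hpdiv : 0 < p / c₁ := div_pos hp0 hc0
  have ht : p / c₁ ≤ p - p ^ 2 := by
    rw [div_le_iff₀ hc0]
    nlinarith [mul_nonneg hp0.le (sub_nonneg.2 hpc)]
  have hs1 : s < 1 := by nlinarith
  have hq2 : p + ε ≤ (1 + s) / 2 := by linarith
  have hq1lem : 1 - 2 * p ≤ s := by
    nlinarith [sq_nonneg (1 - 2 * p - s)]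
  have hq1 : (1 - s) / 2 ≤ p + ε := by linarith
  have hqpos : 0 < p + ε := by linarith
  have hqlt : p + ε < 1 := by linarith
  refine ⟨hqlt, ?_⟩
  have h1q : 0 < 1 - (p + ε) := by linarith
  have hp1' : p < 1 := by
    have : 0 < 1 / c₁ := by positivity
    linarith
  have hprod : p / c₁ ≤ (p + ε) * (1 - (p + ε)) := by
    nlinarith [mul_nonneg (by linarith : (0:ℝ) ≤ (1 + s) / 2 - (p + ε))
      (by linarith : (0:ℝ) ≤ (p + ε) - (1 - s) / 2), hs2]
  have hlog1 : Real.log (p / (p + ε)) ≤ p / (p + ε) - 1 :=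
    Real.log_le_sub_one_of_pos (div_pos hp0 hqpos)
  have hlog2 : Real.log ((1 - p) / (1 - (p + ε))) ≤ (1 - p) / (1 - (p + ε)) - 1 :=
    Real.log_le_sub_one_of_pos (div_pos (by linarith) h1q)
  have hkl : klBernoulli p (p + ε) ≤ ε ^ 2 / ((p + ε) * (1 - (p + ε))) := by
    unfold klBernoulli
    have h1 : p * Real.log (p / (p + ε)) ≤ p * (p / (p + ε) - 1) :=
      mul_le_mul_of_nonneg_left hlog1 hp0.le
    have h2 : (1 - p) * Real.log ((1 - p) / (1 - (p + ε))) ≤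
        (1 - p) * ((1 - p) / (1 - (p + ε)) - 1) :=
      mul_le_mul_of_nonneg_left hlog2 (by linarith)
    have heq : p * (p / (p + ε) - 1) + (1 - p) * ((1 - p) / (1 - (p + ε)) - 1)
        = ε ^ 2 / ((p + ε) * (1 - (p + ε))) := by
      field_simp
      ring
    linarith
  have hfinal : ε ^ 2 / ((p + ε) * (1 - (p + ε))) ≤ c₁ * ε ^ 2 / p := by
    have h : ε ^ 2 / ((p + ε) * (1 - (p + ε))) ≤ ε ^ 2 / (p / c₁) := by
      gcongr
    calc ε ^ 2 / ((p + ε) * (1 - (p + ε))) ≤ ε ^ 2 / (p / c₁) := h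
      _ = c₁ * ε ^ 2 / p := by field_simp
  linarith
end

section
/- (Entropic risk as an OCE) Let β < 0 and define u_β(t) = (e^{βt} − 1)/β for t ∈ ℝ; then u_β is a utility function, and for every probability mass function P on a finite nonempty set S and every g : S → ℝ: OCE^{u_β}_P(g) = (1/β)·log( Σ_{s∈S} P(s)·e^{β·g(s)} ), where log denotes the natural logarithm. -/
/-!
Writing `Z = ∑ P s e^{β g s}`, the OCE objective of `u_β` is the one-variable function
`λ ↦ λ + (Z e^{-βλ} - 1)/β`. Since `β < 0`, the tangent-line bound `e^x ≥ 1 + x` at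
`x = log Z - βλ` shows it is at most `(log Z)/β`, with equality at `λ = (log Z)/β`.
-/

open Real Finset

theorem OCE_eq_of_isGreatest {S : Type*} [Fintype S] {u : ℝ → ℝ} {P g : S → ℝ} {c : ℝ}
    (h : IsGreatest (Set.range fun lam : ℝ => lam + ∑ s, P s * u (g s - lam)) c) :
    OCE u P g = c :=
  h.csSup_eq

theorem IsPMF.sum_mul_pos {S : Type*} [Fintype S] {P f : S → ℝ} (hP : IsPMF P)
    (hf : ∀ s, 0 < f s) : 0 < ∑ s, P s * f s := by
  obtain ⟨s, -, hs⟩ : ∃ s ∈ univ, 0 < P s := exists_lt_of_sum_lt (f := 0) (by simp [hP.2])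
  exact sum_pos' (fun s _ => mul_nonneg (hP.1 s) (hf s).le) ⟨s, mem_univ s, mul_pos hs (hf s)⟩

section Entropic

variable {β : ℝ}

theorem monotone_entropic (hβ : β < 0) : Monotone fun t => (exp (β * t) - 1) / β := by
  intro a b hab
  rw [div_le_div_right_of_neg hβ, sub_le_sub_iff_right, exp_le_exp]
  nlinarith

theorem concaveOn_entropic (hβ : β < 0) :
    ConcaveOn ℝ Set.univ fun t => (exp (β * t) - 1) / β := by
  have hexp : ConvexOn ℝ Set.univ fun t => exp (β * t) :=
    convexOn_exp.comp_linearMap (LinearMap.mulLeft ℝ β)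
  have h := (hexp.smul (c := -β⁻¹) (by simpa using hβ.le)).add_const β⁻¹
  refine neg_convexOn_iff.mp (h.congr fun t _ => ?_)
  simp only [Pi.neg_apply, Pi.add_apply, smul_eq_mul]
  ring

theorem entropic_le_self (hβ : β < 0) (t : ℝ) : (exp (β * t) - 1) / β ≤ t := by
  rw [div_le_iff_of_neg hβ]
  linarith [add_one_le_exp (β * t)]

theorem isUtility_entropic (hβ : β < 0) : IsUtility fun t => (exp (β * t) - 1) / β :=
  ⟨monotone_entropic hβ, concaveOn_entropic hβ, by simp, entropic_le_self hβ⟩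

theorem entropic_objective_eq {S : Type*} [Fintype S] {P : S → ℝ} (hP : IsPMF P)
    (g : S → ℝ) (lam : ℝ) :
    lam + ∑ s, P s * ((exp (β * (g s - lam)) - 1) / β) =
      lam + ((∑ s, P s * exp (β * g s)) * exp (-(β * lam)) - 1) / β := by
  have hterm : ∀ s, P s * ((exp (β * (g s - lam)) - 1) / β) =
      (P s * exp (β * g s) * exp (-(β * lam)) - P s) / β := fun s => by
    rw [mul_sub, sub_eq_add_neg (β * g s), exp_add]
    ring
  simp only [hterm, ← sum_div, sum_sub_distrib, ← sum_mul, hP.2]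

theorem isGreatest_entropic_objective (hβ : β < 0) {Z : ℝ} (hZ : 0 < Z) :
    IsGreatest (Set.range fun lam => lam + (Z * exp (-(β * lam)) - 1) / β) (log Z / β) := by
  have hβ₀ : β ≠ 0 := hβ.ne
  refine ⟨⟨log Z / β, ?_⟩, ?_⟩
  · dsimp only
    rw [mul_div_cancel₀ _ hβ₀, exp_neg, exp_log hZ, mul_inv_cancel₀ hZ.ne', sub_self,
      zero_div, add_zero]
  · rintro _ ⟨lam, rfl⟩
    have htangent : log Z - β * lam ≤ Z * exp (-(β * lam)) - 1 := by
      have := add_one_le_exp (log Z + -(β * lam))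
      rw [exp_add, exp_log hZ] at this
      linarith
    have hdiv : log Z / β - lam = (log Z - β * lam) / β := by field_simp
    dsimp only
    linarith [(div_le_div_right_of_neg hβ).mpr htangent]

end Entropic

theorem entropic_oce_general {S : Type*} [Fintype S] (β : ℝ) (hβ : β < 0) :
    IsUtility (fun t => (Real.exp (β * t) - 1) / β) ∧
    ∀ P : S → ℝ, IsPMF P → ∀ g : S → ℝ,
      OCE (fun t => (Real.exp (β * t) - 1) / β) P g =
        (1 / β) * Real.log (∑ s, P s * Real.exp (β * g s)) := by
  refine ⟨isUtility_entropic hβ, fun P hP g => ?_⟩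
  have hZ := hP.sum_mul_pos fun s => exp_pos (β * g s)
  rw [one_div_mul_eq_div]
  apply OCE_eq_of_isGreatest
  simpa only [entropic_objective_eq hP] using isGreatest_entropic_objective hβ hZ

/-- Entropic risk as an OCE: for `β < 0`, `u_β(t) = (e^{βt} − 1)/β` is a utility
function and its OCE equals `(1/β) log E[e^{β g}]`. -/
theorem entropic_oce {S : Type*} [Fintype S] [Nonempty S] (β : ℝ) (hβ : β < 0) :
    IsUtility (fun t => (Real.exp (β * t) - 1) / β) ∧
    ∀ P : S → ℝ, IsPMF P → ∀ g : S → ℝ,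
      OCE (fun t => (Real.exp (β * t) - 1) / β) P g =
        (1 / β) * Real.log (∑ s, P s * Real.exp (β * g s)) :=
  entropic_oce_general β hβ
end
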